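/- arXiv:1801.00321 — 8 statements merged into one kernel-verified Lean document; each statement's English description precedes it below -/
import Mathlib

section
/- Let A be a finite-dimensional k-algebra, P a finitely generated projective left A-module with two decompositions id_P = Σ_i a_i ∘ b_i = Σ_j a'_j ∘ b'_j where a_i, a'_j : A → P and b_i, b'_j : P → A are A-module maps. Then for any A-module endomorphism f of P and any symmetric linear form t on A (i.e. t(xy) = t(yx) for all x,y), we have Σ_i t((b_i ∘ f ∘ a_i)(1)) = Σ_j t((b'_j ∘ f ∘ a'_j)(1)). -/
/-! An `A`-linear map `A → A` is right multiplication by its value at `1`, so for maps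
`u : A → P`, `v : P → A` the expression `t (v (u 1))` behaves like a trace: symmetry of `t`
makes it cyclic. Inserting `id_P = ∑ j, a' j ∘ b' j` into each term of the left-hand side and
cycling each summand turns it into the right-hand side with `id_P = ∑ i, a i ∘ b i` inserted. -/

namespace LinearMap

variable {A M N : Type*} [Semiring A] [AddCommMonoid M] [Module A M] [AddCommMonoid N] [Module A N]

theorem apply_eq_smul_apply_one (g : A →ₗ[A] M) (x : A) : g x = x • g 1 := by
  rw [← map_smul, smul_eq_mul, mul_one]

theorem apply_apply_eq_mul_apply_apply_one (v : M →ₗ[A] A) (u : A →ₗ[A] M) (x : A) :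
    v (u x) = x * v (u 1) := by
  rw [apply_eq_smul_apply_one u, map_smul, smul_eq_mul]

theorem apply_apply_apply_apply_one_comm {T : Type*} (t : A → T)
    (ht : ∀ x y : A, t (x * y) = t (y * x))
    (v : M →ₗ[A] A) (u' : A →ₗ[A] M) (v' : N →ₗ[A] A) (u : A →ₗ[A] N) :
    t (v (u' (v' (u 1)))) = t (v' (u (v (u' 1)))) := by
  rw [apply_apply_eq_mul_apply_apply_one v u' (v' (u 1)),
    apply_apply_eq_mul_apply_apply_one v' u (v (u' 1)), ht]

variable {T F : Type*} [AddCommMonoid T] [FunLike F A T] [AddMonoidHomClass F A T]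

theorem sum_apply_comp_comp_apply_one_eq {ι κ : Type*} [Fintype ι] [Fintype κ] (t : F)
    (ht : ∀ x y : A, t (x * y) = t (y * x))
    (a : ι → A →ₗ[A] M) (b : ι → M →ₗ[A] A)
    (a' : κ → A →ₗ[A] M) (b' : κ → M →ₗ[A] A)
    (ha : ∑ i, a i ∘ₗ b i = id) (ha' : ∑ j, a' j ∘ₗ b' j = id) (f : M →ₗ[A] M) :
    ∑ i, t ((b i ∘ₗ f ∘ₗ a i) 1) = ∑ j, t ((b' j ∘ₗ f ∘ₗ a' j) 1) := by
  calc ∑ i, t ((b i ∘ₗ f ∘ₗ a i) 1)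
      = ∑ i, t (b i ((∑ j, a' j ∘ₗ b' j) (f (a i 1)))) := by
        simp only [ha', id_apply, comp_apply]
    _ = ∑ i, ∑ j, t (b i (a' j ((b' j ∘ₗ f) (a i 1)))) := by
        simp only [sum_apply, map_sum, comp_apply]
    _ = ∑ j, ∑ i, t ((b' j ∘ₗ f) (a i (b i (a' j 1)))) := by
        rw [Finset.sum_comm]
        exact Finset.sum_congr rfl fun j _ ↦ Finset.sum_congr rfl fun i _ ↦
          apply_apply_apply_apply_one_comm t ht (b i) (a' j) (b' j ∘ₗ f) (a i)
    _ = ∑ j, t (b' j (f ((∑ i, a i ∘ₗ b i) (a' j 1)))) := by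
        simp only [sum_apply, map_sum, comp_apply]
    _ = ∑ j, t ((b' j ∘ₗ f ∘ₗ a' j) 1) := by simp only [ha, id_apply, comp_apply]

end LinearMap

theorem stmt2_general (k A P : Type) [Field k] [Ring A] [Algebra k A]
    [AddCommGroup P] [Module A P]
    (n m : ℕ) (a : Fin n → (A →ₗ[A] P)) (b : Fin n → (P →ₗ[A] A))
    (a' : Fin m → (A →ₗ[A] P)) (b' : Fin m → (P →ₗ[A] A))
    (ha : ∑ i, (a i) ∘ₗ (b i) = (LinearMap.id : P →ₗ[A] P))
    (ha' : ∑ j, (a' j) ∘ₗ (b' j) = (LinearMap.id : P →ₗ[A] P))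
    (t : A →ₗ[k] k) (ht : ∀ x y : A, t (x * y) = t (y * x))
    (f : P →ₗ[A] P) :
    ∑ i, t ((b i ∘ₗ f ∘ₗ a i) 1) = ∑ j, t ((b' j ∘ₗ f ∘ₗ a' j) 1) :=
  LinearMap.sum_apply_comp_comp_apply_one_eq t ht a b a' b' ha ha' f

/-- The value `∑ i, t ((b i ∘ f ∘ a i) 1)` is independent of the chosen decomposition
`id_P = ∑ i, a i ∘ b i` of the identity of a finitely generated projective module `P`
through the regular module, for any symmetric linear form `t` on `A`. -/
theorem stmt2 (k A P : Type) [Field k] [Ring A] [Algebra k A] [FiniteDimensional k A]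
    [AddCommGroup P] [Module A P] [Module.Finite A P] [Module.Projective A P]
    (n m : ℕ) (a : Fin n → (A →ₗ[A] P)) (b : Fin n → (P →ₗ[A] A))
    (a' : Fin m → (A →ₗ[A] P)) (b' : Fin m → (P →ₗ[A] A))
    (ha : ∑ i, (a i) ∘ₗ (b i) = (LinearMap.id : P →ₗ[A] P))
    (ha' : ∑ j, (a' j) ∘ₗ (b' j) = (LinearMap.id : P →ₗ[A] P))
    (t : A →ₗ[k] k) (ht : ∀ x y : A, t (x * y) = t (y * x))
    (f : P →ₗ[A] P) :
    ∑ i, t ((b i ∘ₗ f ∘ₗ a i) 1) = ∑ j, t ((b' j ∘ₗ f ∘ₗ a' j) 1) :=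
  stmt2_general k A P n m a b a' b' ha ha' t ht f
end

section
/- For a finite-dimensional algebra A over a field k, the zeroth Hochschild homology HH_0(A) = A/[A,A] is isomorphic as a k-vector space to the trace space HH_0(A-pmod) of the category of finitely generated projective A-modules, via the map sending the class of x ∈ A to the trace class of the right-multiplication endomorphism r_x of the regular module A. -/
open DirectSum

/-- A bundled finitely generated projective left `A`-module. -/
structure PMod (A : Type) [Ring A] where
  carrier : Type
  [acg : AddCommGroup carrier]
  [mod : Module A carrier]
  proj : Module.Projective A carrier
  fin : Module.Finite A carrier

attribute [instance] PMod.acg PMod.mod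

variable (k A : Type) [Field k] [Ring A] [Algebra k A]

noncomputable instance : DecidableEq (PMod A) := Classical.decEq _

/-- The `k`-module structure on the carrier of a bundled projective `A`-module,
by restriction of scalars along `algebraMap k A`. -/
noncomputable instance PMod.modk (P : PMod A) : Module k P.carrier :=
  Module.compHom P.carrier (algebraMap k A)

instance PMod.smulComm (P : PMod A) : SMulCommClass A k P.carrier where
  smul_comm a c x := by
    show a • ((algebraMap k A c) • x) = (algebraMap k A c) • (a • x)
    rw [← mul_smul, ← mul_smul, Algebra.commutes]

/-- The direct sum, over all finitely generated projective left `A`-modules `P`,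
of the endomorphism spaces `End_A(P)`. -/
noncomputable abbrev EndSum : Type 1 :=
  ⨁ (P : PMod A), (P.carrier →ₗ[A] P.carrier)

/-- The span of the commutators `[C,C] = span { g∘f - f∘g }` inside the direct sum of the
endomorphism spaces. -/
noncomputable def commRel : Submodule k (EndSum A) :=
  Submodule.span k
    {v | ∃ (P P' : PMod A) (f : P.carrier →ₗ[A] P'.carrier)
        (g : P'.carrier →ₗ[A] P.carrier),
      v = DirectSum.of (fun P : PMod A => P.carrier →ₗ[A] P.carrier) P (g ∘ₗ f)
        - DirectSum.of (fun P : PMod A => P.carrier →ₗ[A] P.carrier) P' (f ∘ₗ g)}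

/-- `HH₀` of the category of finitely generated projective `A`-modules. -/
noncomputable abbrev HH0pmod : Type 1 := EndSum A ⧸ commRel k A

/-- The span of commutators `[A,A]` in `A`. -/
noncomputable def commA : Submodule k A :=
  Submodule.span k {z : A | ∃ x y : A, z = x * y - y * x}

/-- `HH₀(A) = A/[A,A]` where `[A,A]` is the `k`-span of commutators. -/
noncomputable abbrev HH0alg : Type := A ⧸ commA k A

/-- The regular module `A`, as an object of `A`-pmod. -/
noncomputable def regMod : PMod A :=
  { carrier := A
    proj := inferInstance
    fin := Module.Finite.self A }

/-!
The inverse map is the Hattori–Stallings trace. A finitely generated projective `P` is a retract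
`P → Aⁿ → P` of a free module, and `f ∈ End(P)` goes to the trace of the matrix of its conjugate
`Aⁿ → P → P → Aⁿ`, read in `A/[A,A]`. Since `tr(MN) ≡ tr(NM)` modulo `[A,A]` also for rectangular
matrices, this is independent of the retraction and kills every `g ∘ f - f ∘ g`. Conversely, in
`HH₀(A-pmod)` the class of `f` equals that of its conjugate on `Aⁿ`, which splits along the
coordinate inclusions and projections into the classes of the right multiplications by the
diagonal entries, i.e. into the class of `r_x` for `x` the trace.
-/

section

variable {A}

theorem trace_mul_sub_trace_mul_mem_commA {m n : Type*} [Fintype m] [Fintype n]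
    (M : Matrix m n A) (N : Matrix n m A) : (M * N).trace - (N * M).trace ∈ commA k A := by
  simp only [Matrix.trace, Matrix.diag, Matrix.mul_apply]
  rw [Finset.sum_comm (s := Finset.univ (α := n)), ← Finset.sum_sub_distrib]
  refine Submodule.sum_mem _ fun i _ => ?_
  rw [← Finset.sum_sub_distrib]
  exact Submodule.sum_mem _ fun j _ => Submodule.subset_span ⟨_, _, rfl⟩

namespace PMod

instance isScalarTower (P : PMod A) : IsScalarTower k A P.carrier where
  smul_assoc c a x := by
    rw [Algebra.smul_def, mul_smul]
    rfl

structure FreeRetract (P : PMod A) where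
  n : ℕ
  incl : P.carrier →ₗ[A] (Fin n → A)
  retr : (Fin n → A) →ₗ[A] P.carrier
  retr_comp_incl : retr ∘ₗ incl = LinearMap.id

theorem nonempty_freeRetract (P : PMod A) : Nonempty P.FreeRetract :=
  have := P.proj
  have := P.fin
  have ⟨n, retr, incl, _, _, h⟩ := Module.Finite.exists_comp_eq_id_of_projective A P.carrier
  ⟨⟨n, incl, retr, h⟩⟩

end PMod

namespace PMod.FreeRetract

variable {P P' : PMod A}

@[simp]
theorem retr_incl (R : P.FreeRetract) (x : P.carrier) : R.retr (R.incl x) = x :=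
  LinearMap.congr_fun R.retr_comp_incl x

noncomputable def trace (R : P.FreeRetract) :
    (P.carrier →ₗ[A] P.carrier) →ₗ[k] HH0alg k A where
  toFun f := Submodule.Quotient.mk (LinearMap.toMatrixRight' (R.incl ∘ₗ f ∘ₗ R.retr)).trace
  map_add' f g := by
    rw [LinearMap.add_comp, LinearMap.comp_add, map_add, Matrix.trace_add,
      Submodule.Quotient.mk_add]
  map_smul' c f := by
    have hmat : ∀ G : (Fin R.n → A) →ₗ[A] (Fin R.n → A),
        LinearMap.toMatrixRight' (c • G) = c • LinearMap.toMatrixRight' G := fun _ => rfl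
    rw [LinearMap.smul_comp, LinearMap.comp_smul, hmat, Matrix.trace_smul,
      Submodule.Quotient.mk_smul, RingHom.id_apply]

theorem trace_apply (R : P.FreeRetract) (f : P.carrier →ₗ[A] P.carrier) :
    R.trace k f = Submodule.Quotient.mk (LinearMap.toMatrixRight' (R.incl ∘ₗ f ∘ₗ R.retr)).trace :=
  rfl

theorem trace_comp_comm (R : P.FreeRetract) (R' : P'.FreeRetract)
    (f : P.carrier →ₗ[A] P'.carrier) (g : P'.carrier →ₗ[A] P.carrier) :
    R.trace k (g ∘ₗ f) = R'.trace k (f ∘ₗ g) := by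
  have hgf : R.incl ∘ₗ (g ∘ₗ f) ∘ₗ R.retr =
      (R.incl ∘ₗ g ∘ₗ R'.retr) ∘ₗ (R'.incl ∘ₗ f ∘ₗ R.retr) := by
    ext; simp
  have hfg : R'.incl ∘ₗ (f ∘ₗ g) ∘ₗ R'.retr =
      (R'.incl ∘ₗ f ∘ₗ R.retr) ∘ₗ (R.incl ∘ₗ g ∘ₗ R'.retr) := by
    ext; simp
  refine (Submodule.Quotient.eq _).2 ?_
  rw [hgf, hfg, LinearMap.toMatrixRight'_comp, LinearMap.toMatrixRight'_comp (l := Fin R'.n)]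
  exact trace_mul_sub_trace_mul_mem_commA k _ _

theorem trace_eq (R R' : P.FreeRetract) (f : P.carrier →ₗ[A] P.carrier) :
    R.trace k f = R'.trace k f := by
  simpa using trace_comp_comm k R R' LinearMap.id f

end PMod.FreeRetract

noncomputable def regRightMul : A →ₗ[k] ((regMod A).carrier →ₗ[A] (regMod A).carrier) where
  toFun x := LinearMap.toSpanSingleton A A x
  map_add' x y := LinearMap.toSpanSingleton_add x y
  map_smul' c x := by
    refine LinearMap.ext fun a => ?_
    show a * c • x = algebraMap k A c * (a * x)
    rw [Algebra.mul_smul_comm, Algebra.smul_def]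

theorem regRightMul_mul (x y : A) :
    regRightMul k (x * y) = regRightMul k y ∘ₗ regRightMul k x := by
  refine LinearMap.ext fun a => ?_
  exact (mul_assoc (show A from a) x y).symm

noncomputable def regFreeRetract : (regMod A).FreeRetract where
  n := 1
  incl := (LinearEquiv.funUnique (Fin 1) A A).symm.toLinearMap
  retr := (LinearEquiv.funUnique (Fin 1) A A).toLinearMap
  retr_comp_incl := LinearMap.ext fun _ => rfl

theorem PMod.FreeRetract.trace_regRightMul (R : (regMod A).FreeRetract) (x : A) :
    R.trace k (regRightMul k x) = Submodule.Quotient.mk x := by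
  rw [R.trace_eq k regFreeRetract]
  change (Submodule.Quotient.mk (∑ i : Fin 1, (Pi.single i (1 : A) : Fin 1 → A) 0 * x) :
    HH0alg k A) = _
  simp

noncomputable def endClass (P : PMod A) : (P.carrier →ₗ[A] P.carrier) →ₗ[k] HH0pmod k A :=
  (commRel k A).mkQ ∘ₗ DirectSum.lof k (PMod A) (fun P : PMod A => P.carrier →ₗ[A] P.carrier) P

theorem endClass_comp_comm {P P' : PMod A} (f : P.carrier →ₗ[A] P'.carrier)
    (g : P'.carrier →ₗ[A] P.carrier) : endClass k P (g ∘ₗ f) = endClass k P' (f ∘ₗ g) :=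
  (Submodule.Quotient.eq _).2 (Submodule.subset_span ⟨P, P', f, g, rfl⟩)

theorem commA_le_ker_endClass_regRightMul :
    commA k A ≤ LinearMap.ker (endClass k (regMod A) ∘ₗ regRightMul k) := by
  refine Submodule.span_le.2 ?_
  rintro _ ⟨x, y, rfl⟩
  simp only [SetLike.mem_coe, LinearMap.mem_ker, map_sub, LinearMap.comp_apply,
    regRightMul_mul, endClass_comp_comm k (regRightMul k x), sub_self]

variable (A) in
noncomputable abbrev freeMod (n : ℕ) : PMod A :=
  { carrier := Fin n → A
    proj := inferInstance
    fin := inferInstance }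

theorem endClass_freeMod (n : ℕ) (F : (Fin n → A) →ₗ[A] (Fin n → A)) :
    endClass k (freeMod A n) F =
      endClass k (regMod A) (regRightMul k (LinearMap.toMatrixRight' F).trace) := by
  have hF : F = ∑ j, (F ∘ₗ LinearMap.single A (fun _ => A) j) ∘ₗ LinearMap.proj j := by
    refine LinearMap.ext fun v => ?_
    rw [LinearMap.sum_apply]
    simp only [LinearMap.comp_apply, LinearMap.proj_apply, LinearMap.coe_single]
    rw [← map_sum, LinearMap.sum_single_apply]
  have hdiag (j : Fin n) : LinearMap.proj j ∘ₗ F ∘ₗ LinearMap.single A (fun _ => A) j =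
      regRightMul k (LinearMap.toMatrixRight' F j j) :=
    LinearMap.ext_ring (one_mul _).symm
  have hsummand (j : Fin n) :
      endClass k (freeMod A n) ((F ∘ₗ LinearMap.single A (fun _ => A) j) ∘ₗ LinearMap.proj j) =
        endClass k (regMod A) (regRightMul k (LinearMap.toMatrixRight' F j j)) :=
    (endClass_comp_comm k (P := freeMod A n) (P' := regMod A) (LinearMap.proj j) _).trans
      (congrArg _ (hdiag j))
  calc endClass k (freeMod A n) F
      = ∑ j, endClass k (freeMod A n)
          ((F ∘ₗ LinearMap.single A (fun _ => A) j) ∘ₗ LinearMap.proj j) := by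
        rw [← map_sum, ← hF]
    _ = endClass k (regMod A) (regRightMul k (LinearMap.toMatrixRight' F).trace) := by
        simp only [hsummand, ← map_sum]
        rfl

theorem PMod.FreeRetract.endClass_eq_freeMod {P : PMod A} (R : P.FreeRetract) (f : P.carrier →ₗ[A] P.carrier) :
    endClass k P f = endClass k (freeMod A R.n) (R.incl ∘ₗ f ∘ₗ R.retr) := by
  conv_lhs => rw [← LinearMap.comp_id f, ← R.retr_comp_incl, ← LinearMap.comp_assoc]
  exact endClass_comp_comm k (P' := freeMod A R.n) R.incl (f ∘ₗ R.retr)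

noncomputable def PMod.freeRetract (P : PMod A) : P.FreeRetract :=
  P.nonempty_freeRetract.some

variable (A) in
noncomputable def endSumTrace : EndSum A →ₗ[k] HH0alg k A :=
  DirectSum.toModule k (PMod A) (HH0alg k A) fun P => P.freeRetract.trace k

theorem endSumTrace_of (P : PMod A) (f : P.carrier →ₗ[A] P.carrier) :
    endSumTrace k A (DirectSum.of (fun P : PMod A => P.carrier →ₗ[A] P.carrier) P f) =
      P.freeRetract.trace k f := by
  exact DirectSum.toModule_lof (N := HH0alg k A) (φ := fun P => P.freeRetract.trace k) k P f

theorem commRel_le_ker_endSumTrace : commRel k A ≤ LinearMap.ker (endSumTrace k A) := by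
  refine Submodule.span_le.2 ?_
  rintro _ ⟨P, P', f, g, rfl⟩
  rw [SetLike.mem_coe, LinearMap.mem_ker, map_sub, endSumTrace_of, endSumTrace_of,
    PMod.FreeRetract.trace_comp_comm k _ P'.freeRetract, sub_self]

variable (A) in
noncomputable def hh0RightMul : HH0alg k A →ₗ[k] HH0pmod k A :=
  (commA k A).liftQ _ (commA_le_ker_endClass_regRightMul k)

variable (A) in
noncomputable def hh0Trace : HH0pmod k A →ₗ[k] HH0alg k A :=
  (commRel k A).liftQ (endSumTrace k A) (commRel_le_ker_endSumTrace k)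

theorem hh0RightMul_mk (x : A) :
    hh0RightMul k A (Submodule.Quotient.mk x) = endClass k (regMod A) (regRightMul k x) :=
  rfl

theorem hh0Trace_endClass (P : PMod A) (f : P.carrier →ₗ[A] P.carrier) :
    hh0Trace k A (endClass k P f) = P.freeRetract.trace k f :=
  endSumTrace_of k P f

end

theorem stmt4 :
    ∃ e : HH0alg k A ≃ₗ[k] HH0pmod k A,
      ∀ x : A,
        e (Submodule.Quotient.mk x) =
          Submodule.Quotient.mk
            (DirectSum.of (fun P : PMod A => P.carrier →ₗ[A] P.carrier) (regMod A)
              (LinearMap.toSpanSingleton A A x)) := by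
  refine ⟨LinearEquiv.ofLinearMap (hh0RightMul k A) (hh0Trace k A) ?_ ?_, fun x => rfl⟩
  · refine Submodule.linearMap_qext _ (DirectSum.linearMap_ext _ fun P => LinearMap.ext fun f => ?_)
    change hh0RightMul k A (hh0Trace k A (endClass k P f)) = endClass k P f
    rw [hh0Trace_endClass, PMod.FreeRetract.trace_apply, hh0RightMul_mk, P.freeRetract.endClass_eq_freeMod k, endClass_freeMod]
  · refine Submodule.linearMap_qext _ (LinearMap.ext fun x => ?_)
    change hh0Trace k A (endClass k (regMod A) (regRightMul k x)) = Submodule.Quotient.mk x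
    rw [hh0Trace_endClass, PMod.FreeRetract.trace_regRightMul]
end

section
/- Let A be a finite-dimensional k-algebra and t : A → k a non-degenerate symmetric linear form (the pairing (x,y) ↦ t(xy) is non-degenerate). Then for every finitely generated projective left A-module P and every left A-module M, the pairing Hom_A(M,P) × Hom_A(P,M) → k given by (f,g) ↦ t_P(f ∘ g) is non-degenerate, where t_P is the canonical extension of t to traces on projective modules. -/
/-!
Write `p i = a i 1`, so that `q = ∑ i, b i q • p i` for every `q : P`. For maps factoring through
the regular module, symmetry of `t` makes `t_P` cyclic: `t_P (u ∘ v) = t (v (u 1))`.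

If `f ≠ 0`, some `b j (f m)` is nonzero, nondegeneracy gives `x` with `t (x * b j (f m)) ≠ 0`, and
`g = (y ↦ y • x • m) ∘ b j` pairs with `f` to exactly this value. If `g ≠ 0`, some `g (p j)` is
nonzero; the Frobenius isomorphism `A ≃ Hom_k(A, k)` lifts a `k`-linear functional `λ` with
`λ (g (p j)) ≠ 0` to an `A`-linear `F : M → A` with `t (x * F m) = λ (x • m)`, and `f = a j ∘ F`
pairs with `g` to `λ (g (p j))`.
-/

open LinearMap

section ProjectiveTrace

variable {k A P : Type*} [CommSemiring k] [Ring A] [Algebra k A] [AddCommGroup P] [Module A P]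
  {ι : Type*} [Fintype ι] {a : ι → A →ₗ[A] P} {b : ι → P →ₗ[A] A}

/-- The trace `t_P` on `End_A(P)` attached to the decomposition `id_P = ∑ i, a i ∘ b i`. -/
def projTrace (t : A →ₗ[k] k) (a : ι → A →ₗ[A] P) (b : ι → P →ₗ[A] A) (h : P →ₗ[A] P) : k :=
  ∑ i, t ((b i ∘ₗ h ∘ₗ a i) 1)

theorem sum_smul_apply_one_of_sum_comp_eq_id (ha : ∑ i, a i ∘ₗ b i = LinearMap.id) (q : P) :
    ∑ i, b i q • a i 1 = q := by
  calc ∑ i, b i q • a i 1 = ∑ i, a i (b i q) := by simp only [← map_smul, smul_eq_mul, mul_one]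
    _ = q := by simpa using LinearMap.congr_fun ha q

theorem projTrace_comp (t : A →ₗ[k] k) (hsym : ∀ x y : A, t (x * y) = t (y * x))
    (ha : ∑ i, a i ∘ₗ b i = LinearMap.id) (u : A →ₗ[A] P) (v : P →ₗ[A] A) :
    projTrace t a b (u ∘ₗ v) = t (v (u 1)) := by
  have hu : ∀ y : A, u y = y • u 1 := fun y => by rw [← map_smul, smul_eq_mul, mul_one]
  calc projTrace t a b (u ∘ₗ v)
      = ∑ i, t (v (a i 1) * b i (u 1)) := by
        simp only [projTrace, LinearMap.comp_apply, hu (v _), map_smul, smul_eq_mul]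
    _ = ∑ i, t (v (b i (u 1) • a i 1)) := by simp only [hsym (v _), map_smul, smul_eq_mul]
    _ = t (v (u 1)) := by
        rw [← map_sum, ← map_sum, sum_smul_apply_one_of_sum_comp_eq_id ha]

theorem exists_apply_ne_zero_of_sum_comp_eq_id (ha : ∑ i, a i ∘ₗ b i = LinearMap.id) {q : P}
    (hq : q ≠ 0) : ∃ i, b i q ≠ 0 := by
  by_contra! h
  exact hq (by simpa [h] using (sum_smul_apply_one_of_sum_comp_eq_id ha q).symm)

theorem exists_apply_apply_one_ne_zero_of_sum_comp_eq_id {M : Type*} [AddCommGroup M] [Module A M]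
    (ha : ∑ i, a i ∘ₗ b i = LinearMap.id) {g : P →ₗ[A] M} (hg : g ≠ 0) :
    ∃ i, g (a i 1) ≠ 0 := by
  obtain ⟨q, hq⟩ := DFunLike.ne_iff.mp hg
  by_contra! h
  rw [← sum_smul_apply_one_of_sum_comp_eq_id ha q] at hq
  simp [h] at hq

end ProjectiveTrace

section Frobenius

variable {k A : Type*} [Field k] [Ring A] [Algebra k A] [FiniteDimensional k A] (t : A →ₗ[k] k)
  (hnd : ∀ y : A, (∀ x : A, t (x * y) = 0) → y = 0)

noncomputable def traceDualEquiv : A ≃ₗ[k] Module.Dual k A :=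
  ((LinearMap.mul k A).flip.compr₂ t).linearEquivOfInjective
    ((injective_iff_map_eq_zero _).mpr fun y hy => hnd y fun x => LinearMap.congr_fun hy x)
    Subspace.dual_finrank_eq.symm

theorem traceDualEquiv_apply (u x : A) : traceDualEquiv t hnd u x = t (x * u) := rfl

theorem mul_traceDualEquiv_symm_apply (φ : Module.Dual k A) (x : A) :
    t (x * (traceDualEquiv t hnd).symm φ) = φ x := by
  rw [← traceDualEquiv_apply t hnd, LinearEquiv.apply_symm_apply]

variable {M : Type*} [AddCommGroup M] [Module A M] [Module k M] [IsScalarTower k A M]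

noncomputable def homOfDual (lam : Module.Dual k M) : M →ₗ[A] A where
  toFun m := (traceDualEquiv t hnd).symm (lam ∘ₗ (toSpanSingleton A M m).restrictScalars k)
  map_add' m m' := (traceDualEquiv t hnd).injective <| by ext x; simp
  map_smul' y m := (traceDualEquiv t hnd).injective <| by
    ext x; simp [traceDualEquiv_apply, ← mul_assoc, mul_traceDualEquiv_symm_apply, mul_smul]

theorem mul_homOfDual_apply (lam : Module.Dual k M) (x : A) (m : M) :
    t (x * homOfDual t hnd lam m) = lam (x • m) :=
  mul_traceDualEquiv_symm_apply t hnd _ x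

end Frobenius

theorem exists_trace_apply_ne_zero {k A M : Type*} [Field k] [Ring A] [Algebra k A]
    [FiniteDimensional k A] [AddCommGroup M] [Module A M] (t : A →ₗ[k] k)
    (hnd : ∀ y : A, (∀ x : A, t (x * y) = 0) → y = 0) {m : M} (hm : m ≠ 0) :
    ∃ F : M →ₗ[A] A, t (F m) ≠ 0 := by
  let : Module k M := .compHom M (algebraMap k A)
  have : IsScalarTower k A M := .of_algebraMap_smul fun _ _ => rfl
  obtain ⟨lam, hlam⟩ := Module.Projective.exists_dual_ne_zero k hm
  refine ⟨homOfDual t hnd lam, ?_⟩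
  rwa [← one_mul (homOfDual t hnd lam m), mul_homOfDual_apply, one_smul]

theorem stmt5_general (k A P M : Type) [Field k] [Ring A] [Algebra k A] [FiniteDimensional k A]
    [AddCommGroup P] [Module A P]
    [AddCommGroup M] [Module A M]
    (t : A →ₗ[k] k) (hsym : ∀ x y : A, t (x * y) = t (y * x))
    (hnd : ∀ y : A, (∀ x : A, t (x * y) = 0) → y = 0)
    (n : ℕ) (a : Fin n → (A →ₗ[A] P)) (b : Fin n → (P →ₗ[A] A))
    (ha : ∑ i, (a i) ∘ₗ (b i) = (LinearMap.id : P →ₗ[A] P)) :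
    (∀ f : M →ₗ[A] P,
        (∀ g : P →ₗ[A] M, ∑ i, t ((b i ∘ₗ (f ∘ₗ g) ∘ₗ a i) 1) = 0) → f = 0) ∧
    (∀ g : P →ₗ[A] M,
        (∀ f : M →ₗ[A] P, ∑ i, t ((b i ∘ₗ (f ∘ₗ g) ∘ₗ a i) 1) = 0) → g = 0) := by
  constructor
  · intro f hf
    by_contra hf0
    obtain ⟨m, hm⟩ := DFunLike.ne_iff.mp hf0
    obtain ⟨j, hj⟩ := exists_apply_ne_zero_of_sum_comp_eq_id ha hm
    obtain ⟨x, hx⟩ : ∃ x : A, t (x * b j (f m)) ≠ 0 := by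
      by_contra! h
      exact hj (hnd _ h)
    have hpair : projTrace t a b (f ∘ₗ toSpanSingleton A M (x • m) ∘ₗ b j) = 0 := hf _
    rw [← LinearMap.comp_assoc, projTrace_comp t hsym ha, LinearMap.comp_apply,
      toSpanSingleton_apply_one, map_smul, map_smul, smul_eq_mul] at hpair
    exact hx hpair
  · intro g hg
    by_contra hg0
    obtain ⟨j, hj⟩ := exists_apply_apply_one_ne_zero_of_sum_comp_eq_id ha hg0
    obtain ⟨F, hF⟩ := exists_trace_apply_ne_zero t hnd hj
    have hpair : projTrace t a b ((a j ∘ₗ F) ∘ₗ g) = 0 := hg _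
    rw [LinearMap.comp_assoc, projTrace_comp t hsym ha] at hpair
    exact hF hpair

/-- Theorem 2.6 (3): if `t` is a non-degenerate symmetric linear form on a finite-dimensional
algebra `A`, then for every finitely generated projective `A`-module `P` and every `A`-module
`M` the pairing `(f, g) ↦ t_P (f ∘ g)` on `Hom_A(M,P) × Hom_A(P,M)` is non-degenerate, where
`t_P (h) = ∑ i, t ((b i ∘ h ∘ a i) 1)` for any decomposition `id_P = ∑ i, a i ∘ b i` of the
identity through the regular module. -/
theorem stmt5 (k A P M : Type) [Field k] [Ring A] [Algebra k A] [FiniteDimensional k A]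
    [AddCommGroup P] [Module A P] [Module.Finite A P] [Module.Projective A P]
    [AddCommGroup M] [Module A M]
    (t : A →ₗ[k] k) (hsym : ∀ x y : A, t (x * y) = t (y * x))
    (hnd : ∀ y : A, (∀ x : A, t (x * y) = 0) → y = 0)
    (n : ℕ) (a : Fin n → (A →ₗ[A] P)) (b : Fin n → (P →ₗ[A] A))
    (ha : ∑ i, (a i) ∘ₗ (b i) = (LinearMap.id : P →ₗ[A] P)) :
    (∀ f : M →ₗ[A] P,
        (∀ g : P →ₗ[A] M, ∑ i, t ((b i ∘ₗ (f ∘ₗ g) ∘ₗ a i) 1) = 0) → f = 0) ∧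
    (∀ g : P →ₗ[A] M,
        (∀ f : M →ₗ[A] P, ∑ i, t ((b i ∘ₗ (f ∘ₗ g) ∘ₗ a i) 1) = 0) → g = 0) :=
  stmt5_general k A P M t hsym hnd n a b ha
end

section
/- Let H be a finite-dimensional Hopf algebra with right integral μ and comodulus a (the group-like element of H satisfying (id ⊗ μ)Δ(x) = μ(x)·a). Then the form x ↦ μ(ax) is a left integral on H. -/
open TensorProduct

/-- Equation (4.10): for a finite-dimensional Hopf algebra `H` with nonzero right integral `μ`
and comodulus `a` (defined by `(id ⊗ μ)Δ(x) = μ(x)·a`), the linear form `x ↦ μ(a x)` is a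
left integral on `H`. -/
theorem stmt11 (k H : Type) [Field k] [Ring H] [HopfAlgebra k H] [FiniteDimensional k H]
    (μ : H →ₗ[k] k) (hμ0 : μ ≠ 0)
    (hμ : ∀ x : H,
      TensorProduct.lid k H (LinearMap.rTensor H μ (Coalgebra.comul x)) = μ x • (1 : H))
    (a : H)
    (ha : ∀ x : H,
      TensorProduct.rid k H (LinearMap.lTensor H μ (Coalgebra.comul x)) = μ x • a) :
    ∀ x : H,
      TensorProduct.rid k H
          (LinearMap.lTensor H (μ ∘ₗ LinearMap.mulLeft k a) (Coalgebra.comul x)) =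
        μ (a * x) • (1 : H) := by
  classical
  obtain ⟨x0, hx0⟩ : ∃ y : H, μ y ≠ 0 := by
    by_contra h
    push_neg at h
    exact hμ0 (LinearMap.ext fun y => by simpa using h y)
  -- `R' : H ⊗ H → H` is `y ⊗ z ↦ μ z • y`
  set R' : H ⊗[k] H →ₗ[k] H :=
    (TensorProduct.rid k H).toLinearMap ∘ₗ LinearMap.lTensor H μ with hR'
  have hR'app : ∀ (y z : H), R' (y ⊗ₜ[k] z) = μ z • y := by
    intro y z; simp [hR', TensorProduct.smul_tmul']
  have hGa : ∀ x : H, R' (Coalgebra.comul x) = μ x • a := fun x => ha x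
  -- Step 1 : comul a = a ⊗ a
  have h1 : ∀ t : H ⊗[k] H,
      Coalgebra.comul (R := k) (R' t) =
        TensorProduct.rid k (H ⊗[k] H)
          (LinearMap.lTensor (H ⊗[k] H) μ
            (LinearMap.rTensor H (Coalgebra.comul (R := k)) t)) := by
    intro t
    induction t using TensorProduct.induction_on with
    | zero => simp
    | tmul y z => simp [hR'app, TensorProduct.smul_tmul']
    | add s t hs ht => simp [map_add, hs, ht]
  have h2 : ∀ s : (H ⊗[k] H) ⊗[k] H,
      TensorProduct.rid k (H ⊗[k] H) (LinearMap.lTensor (H ⊗[k] H) μ s) =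
        LinearMap.lTensor H R' ((TensorProduct.assoc k H H H) s) := by
    intro s
    induction s using TensorProduct.induction_on with
    | zero => simp
    | tmul t v =>
      induction t using TensorProduct.induction_on with
      | zero => simp
      | tmul y u => simp [hR'app, TensorProduct.smul_tmul', TensorProduct.tmul_smul]
      | add p q hp hq =>
        simp only [TensorProduct.add_tmul, map_add] at *
        rw [hp, hq]
    | add s t hs ht => simp [map_add, hs, ht]
  have h3 : ∀ t : H ⊗[k] H,
      LinearMap.lTensor H (R' ∘ₗ Coalgebra.comul (R := k)) t = (R' t) ⊗ₜ[k] a := by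
    intro t
    induction t using TensorProduct.induction_on with
    | zero => simp
    | tmul y z =>
      simp only [LinearMap.lTensor_tmul, LinearMap.comp_apply, hGa, hR'app,
        TensorProduct.smul_tmul', TensorProduct.tmul_smul]
    | add s t hs ht => simp [map_add, hs, ht, TensorProduct.add_tmul]
  have hcomul_a : Coalgebra.comul (R := k) a = a ⊗ₜ[k] a := by
    have key : μ x0 • Coalgebra.comul (R := k) a = μ x0 • (a ⊗ₜ[k] a) := by
      calc μ x0 • Coalgebra.comul (R := k) a
          = Coalgebra.comul (R := k) (μ x0 • a) := by rw [map_smul]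
        _ = Coalgebra.comul (R := k) (R' (Coalgebra.comul x0)) := by rw [hGa x0]
        _ = TensorProduct.rid k (H ⊗[k] H)
              (LinearMap.lTensor (H ⊗[k] H) μ
                (LinearMap.rTensor H (Coalgebra.comul (R := k)) (Coalgebra.comul x0))) :=
            h1 _
        _ = LinearMap.lTensor H R'
              ((TensorProduct.assoc k H H H)
                (LinearMap.rTensor H (Coalgebra.comul (R := k)) (Coalgebra.comul x0))) :=
            h2 _
        _ = LinearMap.lTensor H R'
              (LinearMap.lTensor H (Coalgebra.comul (R := k)) (Coalgebra.comul x0)) := by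
            rw [Coalgebra.coassoc_apply]
        _ = LinearMap.lTensor H (R' ∘ₗ Coalgebra.comul (R := k)) (Coalgebra.comul x0) := by
            conv_rhs => rw [LinearMap.lTensor_comp]
            rfl
        _ = (R' (Coalgebra.comul x0)) ⊗ₜ[k] a := h3 _
        _ = μ x0 • (a ⊗ₜ[k] a) := by rw [hGa x0, TensorProduct.smul_tmul']
    exact smul_right_injective _ hx0 key
  -- Step 2 : counit a = 1
  have h4 : ∀ t : H ⊗[k] H,
      Coalgebra.counit (R := k) (R' t) =
        μ (TensorProduct.lid k H (LinearMap.rTensor H (Coalgebra.counit (R := k)) t)) := by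
    intro t
    induction t using TensorProduct.induction_on with
    | zero => simp
    | tmul y z => simp [hR'app, mul_comm]
    | add s t hs ht => simp [map_add, hs, ht]
  have hcounit_a : Coalgebra.counit (R := k) a = 1 := by
    have := h4 (Coalgebra.comul x0)
    rw [hGa x0, Coalgebra.rTensor_counit_comul] at this
    simp only [map_smul, smul_eq_mul, TensorProduct.lid_tmul, one_smul] at this
    field_simp at this
    exact this
  -- Step 3 : antipode a * a = 1
  have hSa : HopfAlgebra.antipode (R := k) a * a = 1 := by
    have := HopfAlgebra.mul_antipode_rTensor_comul_apply (R := k) (a := a)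
    rw [hcomul_a, hcounit_a] at this
    simpa [LinearMap.mul'_apply] using this
  -- Step 4 : conclude
  intro x
  have h5 : ∀ t : H ⊗[k] H,
      R' ((a ⊗ₜ[k] a) * t) =
        a * TensorProduct.rid k H
          (LinearMap.lTensor H (μ ∘ₗ LinearMap.mulLeft k a) t) := by
    intro t
    induction t using TensorProduct.induction_on with
    | zero => simp
    | tmul y z =>
      simp only [Algebra.TensorProduct.tmul_mul_tmul, hR'app, LinearMap.lTensor_tmul,
        LinearMap.comp_apply, LinearMap.mulLeft_apply, TensorProduct.rid_tmul,
        mul_smul_comm]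
    | add s t hs ht => simp [map_add, mul_add, hs, ht]
  have key : a * TensorProduct.rid k H
      (LinearMap.lTensor H (μ ∘ₗ LinearMap.mulLeft k a) (Coalgebra.comul x)) =
      μ (a * x) • a := by
    rw [← h5, ← hcomul_a, ← Bialgebra.comul_mul]
    exact hGa (a * x)
  calc TensorProduct.rid k H
        (LinearMap.lTensor H (μ ∘ₗ LinearMap.mulLeft k a) (Coalgebra.comul x))
      = (HopfAlgebra.antipode (R := k) a * a) *
          TensorProduct.rid k H
            (LinearMap.lTensor H (μ ∘ₗ LinearMap.mulLeft k a) (Coalgebra.comul x)) := by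
        rw [hSa, one_mul]
    _ = HopfAlgebra.antipode (R := k) a * (μ (a * x) • a) := by rw [mul_assoc, key]
    _ = μ (a * x) • (HopfAlgebra.antipode (R := k) a * a) := by rw [mul_smul_comm]
    _ = μ (a * x) • (1 : H) := by rw [hSa]
end

section
/- A finite-dimensional pivotal Hopf algebra (H, g) is unibalanced (its symmetrised right integral μ_g := μ(g·−) is also a symmetrised left integral, i.e. satisfies (g^{-1} ⊗ μ_g)Δ(x) = μ_g(x)·1 for all x) if and only if the comodulus a equals g². -/
/-!
If `g` is group-like, `Δ(g x) = (g ⊗ g) Δ(x)`, so applying the comodulus identity to `g x` gives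
`g · (id ⊗ μ_g)Δ(x) = μ_g(x) · a`. Hence `(g⁻¹ ⊗ μ_g)Δ(x) = μ_g(x) · g⁻² a`, and since `μ_g`
is nonzero this equals `μ_g(x) · 1` for all `x` exactly when `g⁻² a = 1`.
-/

open TensorProduct

section

variable {R A : Type*} [CommSemiring R] [Semiring A] [Algebra R A] (φ : A →ₗ[R] R)

lemma rid_lTensor_tmul_one_mul (g : A) (S : A ⊗[R] A) :
    TensorProduct.rid R A (LinearMap.lTensor A φ ((g ⊗ₜ[R] (1 : A)) * S)) =
      g * TensorProduct.rid R A (LinearMap.lTensor A φ S) := by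
  induction S using TensorProduct.induction_on with
  | zero => simp
  | tmul u v => simp [Algebra.TensorProduct.tmul_mul_tmul]
  | add S T hS hT => simp [mul_add, hS, hT]

lemma rid_lTensor_one_tmul_mul (g : A) (S : A ⊗[R] A) :
    TensorProduct.rid R A (LinearMap.lTensor A φ (((1 : A) ⊗ₜ[R] g) * S)) =
      TensorProduct.rid R A (LinearMap.lTensor A (φ ∘ₗ LinearMap.mulLeft R g) S) := by
  induction S using TensorProduct.induction_on with
  | zero => simp
  | tmul u v => simp [Algebra.TensorProduct.tmul_mul_tmul]
  | add S T hS hT => simp [mul_add, hS, hT]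

end

lemma mul_rid_lTensor_comp_mulLeft_comul {R A : Type*} [CommSemiring R] [Semiring A]
    [Bialgebra R A] (φ : A →ₗ[R] R) {a g : A}
    (ha : ∀ x : A, TensorProduct.rid R A (LinearMap.lTensor A φ (Coalgebra.comul x)) = φ x • a)
    (hg : Coalgebra.comul (R := R) g = g ⊗ₜ[R] g) (x : A) :
    g * TensorProduct.rid R A
        (LinearMap.lTensor A (φ ∘ₗ LinearMap.mulLeft R g) (Coalgebra.comul x)) =
      φ (g * x) • a := by
  have hcomul : Coalgebra.comul (R := R) (g * x) =
      (g ⊗ₜ[R] (1 : A)) * (((1 : A) ⊗ₜ[R] g) * Coalgebra.comul x) := by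
    rw [Bialgebra.comul_mul, hg, ← mul_assoc, Algebra.TensorProduct.tmul_mul_tmul, mul_one,
      one_mul]
  rw [← ha, hcomul, rid_lTensor_tmul_one_mul, rid_lTensor_one_tmul_mul]

theorem stmt12_general (k H : Type) [Field k] [Ring H] [HopfAlgebra k H]
    (μ : H →ₗ[k] k) (hμ0 : μ ≠ 0)
    (a : H)
    (ha : ∀ x : H,
      TensorProduct.rid k H (LinearMap.lTensor H μ (Coalgebra.comul x)) = μ x • a)
    (g gi : H) (hggi : g * gi = 1) (hgig : gi * g = 1)
    (hgrp : Coalgebra.comul (R := k) g = g ⊗ₜ[k] g) :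
    (∀ x : H,
        gi * (TensorProduct.rid k H
            (LinearMap.lTensor H (μ ∘ₗ LinearMap.mulLeft k g) (Coalgebra.comul x))) =
          μ (g * x) • (1 : H)) ↔ a = g * g := by
  let g2 : Hˣ := ⟨g * g, gi * gi, by simp [mul_assoc, ← mul_assoc g gi, hggi],
    by simp [mul_assoc, ← mul_assoc gi g, hgig]⟩
  have hcomod : ∀ x : H, gi * (TensorProduct.rid k H
      (LinearMap.lTensor H (μ ∘ₗ LinearMap.mulLeft k g) (Coalgebra.comul x))) =
        μ (g * x) • (↑g2⁻¹ * a) := fun x => by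
    rw [show (↑g2⁻¹ : H) = gi * gi from rfl, mul_assoc, ← mul_smul_comm, ← mul_smul_comm,
      ← mul_rid_lTensor_comp_mulLeft_comul μ ha hgrp x, ← mul_assoc gi g, hgig, one_mul]
  obtain ⟨y, hy⟩ := DFunLike.ne_iff.mp hμ0
  simp only [hcomod]
  constructor
  · intro h
    have hy' := h (gi * y)
    rw [← mul_assoc, hggi, one_mul] at hy'
    exact (Units.inv_mul_eq_one.mp (smul_right_injective H hy hy')).symm
  · intro hag x
    rw [hag, show g * g = g2 from rfl, Units.inv_mul]

/-- Lemma 4.8: a finite-dimensional pivotal Hopf algebra `(H, g)` is unibalanced, i.e. the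
symmetrised right integral `μ_g = μ(g ·)` satisfies the defining relation of a symmetrised
left integral `(g⁻¹ ⊗ μ_g)Δ(x) = μ_g(x)·1`, if and only if the comodulus `a` equals `g²`. -/
theorem stmt12 (k H : Type) [Field k] [Ring H] [HopfAlgebra k H] [FiniteDimensional k H]
    (μ : H →ₗ[k] k) (hμ0 : μ ≠ 0)
    (hμ : ∀ x : H,
      TensorProduct.lid k H (LinearMap.rTensor H μ (Coalgebra.comul x)) = μ x • (1 : H))
    (a : H)
    (ha : ∀ x : H,
      TensorProduct.rid k H (LinearMap.lTensor H μ (Coalgebra.comul x)) = μ x • a)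
    (g gi : H) (hggi : g * gi = 1) (hgig : gi * g = 1)
    (hgrp : Coalgebra.comul (R := k) g = g ⊗ₜ[k] g)
    (hpiv : ∀ x : H,
      HopfAlgebra.antipode (R := k) (HopfAlgebra.antipode (R := k) x) = g * x * gi) :
    (∀ x : H,
        gi * (TensorProduct.rid k H
            (LinearMap.lTensor H (μ ∘ₗ LinearMap.mulLeft k g) (Coalgebra.comul x))) =
          μ (g * x) • (1 : H)) ↔ a = g * g :=
  stmt12_general k H μ hμ0 a ha g gi hggi hgig hgrp
end

section
/- Let H be a finite-dimensional Hopf algebra and W a finite-dimensional left H-module of dimension m. Then there is an algebra isomorphism H^op ⊗ Mat_m(k) ≅ End_H(H ⊗ W), where H ⊗ W carries the diagonal module structure; in particular End_H(H ⊗ W) ≅ Mat_m(H^op). -/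
/-!
The map `diagTwist : x ⊗ w ↦ x • (1 ⊗ w) = x⁽¹⁾ ⊗ x⁽²⁾w` is `H`-linear from `H ⊗ W` with `H`
acting on the left factor only to `H ⊗ W` with the diagonal action, and by coassociativity and
the antipode axioms `diagUntwist : x ⊗ w ↦ x⁽¹⁾ ⊗ S(x⁽²⁾)w` is its inverse. So the diagonal module
`H ⊗ W` is isomorphic to `H ⊗ k^m ≅ H^m`, free of rank `m`, whose endomorphism ring is
`Mat_m(Hᵐᵒᵖ) ≅ Hᵐᵒᵖ ⊗ Mat_m(k)`.
-/

open TensorProduct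

variable (k H W : Type) [Field k] [Ring H] [HopfAlgebra k H]
variable [AddCommGroup W] [Module k W] [Module H W] [IsScalarTower k H W]

/-- The diagonal action of `H` on `H ⊗ W`, as an algebra map `H → End_k(H ⊗ W)`:
`h ↦ (x ⊗ w ↦ h⁽¹⁾x ⊗ h⁽²⁾w)`. -/
noncomputable def diagActionHom : H →ₐ[k] Module.End k (H ⊗[k] W) :=
  ((Module.endTensorEndAlgHom (R := k) (S := k) (A := k) (M := H) (N := W)).comp
      (Algebra.TensorProduct.map (Algebra.lmul k H) (Algebra.lsmul k k W (A := H)))).comp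
    (Bialgebra.comulAlgHom k H)

/-- The diagonal left `H`-module structure on `H ⊗ W`: `h • (x ⊗ w) = h⁽¹⁾x ⊗ h⁽²⁾w`. -/
noncomputable def diagModuleW : Module H (H ⊗[k] W) :=
  Module.compHom (H ⊗[k] W) (diagActionHom k H W).toRingHom

open Coalgebra HopfAlgebra

lemma Coalgebra.sum_tmul_counit_smul {R A M ι : Type*} [CommSemiring R] [AddCommMonoid A]
    [Module R A] [Coalgebra R A] [AddCommMonoid M] [Module R M] {a : A} (r : Repr R a ι)
    (m : M) : ∑ i ∈ r.index, r.left i ⊗ₜ[R] (counit (R := R) (r.right i) • m) = a ⊗ₜ m := by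
  simpa only [map_sum, LinearMap.lTensor_tmul, LinearMap.toSpanSingleton_apply, one_smul]
    using congr(LinearMap.lTensor A (LinearMap.toSpanSingleton R M m) $(sum_tmul_counit_eq r))

lemma diagActionHom_tmul (h x : H) (w : W) {ι : Type*} (r : Repr k h ι) :
    diagActionHom k H W h (x ⊗ₜ w) = ∑ i ∈ r.index, (r.left i * x) ⊗ₜ (r.right i • w) := by
  change Module.endTensorEndAlgHom
      ((Algebra.TensorProduct.map (Algebra.lmul k H) (Algebra.lsmul k k W)) (comul h)) _ = _
  rw [← r.eq]
  simp only [map_sum, LinearMap.coe_sum, Finset.sum_apply, Algebra.TensorProduct.map_tmul,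
    Module.endTensorEndAlgHom_apply]
  rfl

noncomputable def diagTwist : H ⊗[k] W →ₗ[k] H ⊗[k] W :=
  lift ((LinearMap.llcomp k W (H ⊗[k] W) (H ⊗[k] W)).flip (mk k H W 1) ∘ₗ
    (diagActionHom k H W).toLinearMap)

lemma diagTwist_tmul (x : H) (w : W) :
    diagTwist k H W (x ⊗ₜ w) = diagActionHom k H W x (1 ⊗ₜ w) := rfl

lemma diagTwist_tmul_eq_sum (x : H) (w : W) {ι : Type*} (r : Repr k x ι) :
    diagTwist k H W (x ⊗ₜ w) = ∑ i ∈ r.index, r.left i ⊗ₜ (r.right i • w) := by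
  simp only [diagTwist_tmul, diagActionHom_tmul k H W x 1 w r, mul_one]

lemma diagTwist_smul (h : H) (z : H ⊗[k] W) :
    diagTwist k H W (h • z) = diagActionHom k H W h (diagTwist k H W z) := by
  induction z using TensorProduct.induction_on with
  | zero => simp
  | tmul x w => rw [smul_tmul', smul_eq_mul, diagTwist_tmul, diagTwist_tmul, map_mul]; rfl
  | add a b ha hb => rw [smul_add, map_add, ha, hb, ← map_add, ← map_add]

noncomputable def diagUntwist : H ⊗[k] W →ₗ[k] H ⊗[k] W :=
  LinearMap.lTensor H (lift (Algebra.lsmul k k W).toLinearMap ∘ₗ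
      LinearMap.rTensor W (antipode k)) ∘ₗ
    (TensorProduct.assoc k H H W).toLinearMap ∘ₗ LinearMap.rTensor W (comul (R := k))

lemma diagUntwist_tmul_eq_sum (x : H) (w : W) {ι : Type*} (r : Repr k x ι) :
    diagUntwist k H W (x ⊗ₜ w) = ∑ i ∈ r.index, r.left i ⊗ₜ (antipode k (r.right i) • w) := by
  simp only [diagUntwist, LinearMap.comp_apply, LinearMap.rTensor_tmul, ← r.eq, sum_tmul,
    map_sum, LinearEquiv.coe_coe, assoc_tmul, LinearMap.lTensor_tmul, lift.tmul,
    AlgHom.toLinearMap_apply, Algebra.lsmul_coe]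

lemma sum_tmul_bilin_smul_coassoc (μ : H →ₗ[k] H →ₗ[k] H) (w : W) {x : H} {ι : Type*}
    {κ Λ : ι → Type*} (r : Repr k x ι) (a₁ : (i : ι) → Repr k (r.left i) (κ i))
    (a₂ : (i : ι) → Repr k (r.right i) (Λ i)) :
    ∑ i ∈ r.index, ∑ j ∈ (a₁ i).index,
        (a₁ i).left j ⊗ₜ[k] (μ ((a₁ i).right j) (r.right i) • w) =
      ∑ i ∈ r.index, ∑ j ∈ (a₂ i).index,
        r.left i ⊗ₜ[k] (μ ((a₂ i).left j) ((a₂ i).right j) • w) := by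
  simpa only [map_sum, LinearMap.lTensor_tmul, LinearMap.comp_apply, lift.tmul,
    LinearMap.flip_apply, AlgHom.toLinearMap_apply, Algebra.lsmul_coe]
    using congr(LinearMap.lTensor H
      ((Algebra.lsmul k k W).toLinearMap.flip w ∘ₗ lift μ) $(sum_tmul_tmul_eq r a₁ a₂))

lemma diagUntwist_diagTwist (z : H ⊗[k] W) : diagUntwist k H W (diagTwist k H W z) = z := by
  induction z using TensorProduct.induction_on with
  | zero => simp
  | add a b ha hb => rw [map_add, map_add, ha, hb]
  | tmul x w =>
    let r := ℛ k x
    calc diagUntwist k H W (diagTwist k H W (x ⊗ₜ w))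
        = ∑ i ∈ r.index, ∑ j ∈ (ℛ k (r.left i)).index, (ℛ k (r.left i)).left j ⊗ₜ
            ((antipode k ((ℛ k (r.left i)).right j) * r.right i) • w) := by
          simp only [diagTwist_tmul_eq_sum k H W x w r, map_sum,
            diagUntwist_tmul_eq_sum k H W _ _ (ℛ k _), smul_smul]
      _ = ∑ i ∈ r.index, ∑ j ∈ (ℛ k (r.right i)).index, r.left i ⊗ₜ
            ((antipode k ((ℛ k (r.right i)).left j) * (ℛ k (r.right i)).right j) • w) :=
          sum_tmul_bilin_smul_coassoc k H W ((LinearMap.mul k H).comp (antipode k)) w r _ _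
      _ = x ⊗ₜ w := by
          simp only [← tmul_sum, ← Finset.sum_smul, sum_antipode_mul_eq_smul, smul_assoc,
            one_smul, sum_tmul_counit_smul]

lemma diagTwist_diagUntwist (z : H ⊗[k] W) : diagTwist k H W (diagUntwist k H W z) = z := by
  induction z using TensorProduct.induction_on with
  | zero => simp
  | add a b ha hb => rw [map_add, map_add, ha, hb]
  | tmul x w =>
    let r := ℛ k x
    calc diagTwist k H W (diagUntwist k H W (x ⊗ₜ w))
        = ∑ i ∈ r.index, ∑ j ∈ (ℛ k (r.left i)).index, (ℛ k (r.left i)).left j ⊗ₜ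
            (((ℛ k (r.left i)).right j * antipode k (r.right i)) • w) := by
          simp only [diagUntwist_tmul_eq_sum k H W x w r, map_sum,
            diagTwist_tmul_eq_sum k H W _ _ (ℛ k _), smul_smul]
      _ = ∑ i ∈ r.index, ∑ j ∈ (ℛ k (r.right i)).index, r.left i ⊗ₜ
            (((ℛ k (r.right i)).left j * antipode k ((ℛ k (r.right i)).right j)) • w) :=
          sum_tmul_bilin_smul_coassoc k H W ((LinearMap.mul k H).compl₂ (antipode k)) w r _ _
      _ = x ⊗ₜ w := by
          simp only [← tmul_sum, ← Finset.sum_smul, sum_mul_antipode_eq_smul, smul_assoc,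
            one_smul, sum_tmul_counit_smul]

noncomputable def diagTwistEquiv :
    @LinearEquiv H H _ _ (RingHom.id H) (RingHom.id H) _ _ (H ⊗[k] W) (H ⊗[k] W) _ _
      inferInstance (diagModuleW k H W) :=
  @LinearEquiv.mk H H _ _ (RingHom.id H) (RingHom.id H) _ _ (H ⊗[k] W) (H ⊗[k] W) _ _
    inferInstance (diagModuleW k H W)
    (@LinearMap.mk H H _ _ (RingHom.id H) (H ⊗[k] W) (H ⊗[k] W) _ _
      inferInstance (diagModuleW k H W) (diagTwist k H W).toAddHom (diagTwist_smul k H W))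
    (diagUntwist k H W) (diagUntwist_diagTwist k H W) (diagTwist_diagUntwist k H W)

noncomputable def matrixMulOppositeRingEquivEndVec (R : Type*) [Ring R] (m : ℕ) :
    Matrix (Fin m) (Fin m) Rᵐᵒᵖ ≃+* Module.End R (Fin m → R) :=
  ((endVecRingEquivMatrixEnd (Fin m) R R).trans
    (RingEquiv.moduleEndSelf R).symm.mapMatrix).symm

noncomputable def matrixMulOppositeRingEquivEndDiag [FiniteDimensional k W] (m : ℕ)
    (hm : Module.finrank k W = m) :
    Matrix (Fin m) (Fin m) Hᵐᵒᵖ ≃+* @Module.End H (H ⊗[k] W) _ _ (diagModuleW k H W) :=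
  ((matrixMulOppositeRingEquivEndVec H m).trans
    ((Module.finBasisOfFinrankEq k W hm).baseChange H).equivFun.symm.conjRingEquiv).trans
    (@LinearEquiv.conjRingEquiv _ _ _ _ _ _ _ _ _ (diagModuleW k H W) _ _ _ _
      (diagTwistEquiv k H W))

theorem stmt16 (m : ℕ) [FiniteDimensional k W]
    (hm : Module.finrank k W = m) :
    letI : Module H (H ⊗[k] W) := diagModuleW k H W
    Nonempty ((Hᵐᵒᵖ ⊗[k] Matrix (Fin m) (Fin m) k) ≃+* Module.End H (H ⊗[k] W)) ∧
      Nonempty ((Matrix (Fin m) (Fin m) Hᵐᵒᵖ) ≃+* Module.End H (H ⊗[k] W)) := by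
  let e := matrixMulOppositeRingEquivEndDiag k H W m hm
  exact ⟨⟨(matrixEquivTensor (Fin m) k Hᵐᵒᵖ).symm.toRingEquiv.trans e⟩, ⟨e⟩⟩
end

section
/- For a finite-dimensional unimodular pivotal Hopf algebra (H, g) with two-sided cointegral c normalized so that μ(c) = 1, and for f ∈ End_H(H) the right multiplication by x = f(1), the quantum trace tr_H(l_g ∘ f) (the ordinary trace of left multiplication by g composed with f on H) equals ε(c)·μ_g(x), where μ_g(x) = μ(gx) is the symmetrised right integral. In particular the quantum trace on the regular representation vanishes identically if and only if H is not semisimple. -/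
/-!
For a right integral `μ` and a right cointegral `c` with `μ c = 1`, the map
`y ↦ ∑ μ (c₁ y) • c₂` is a left convolution inverse of the identity, hence it is the antipode.
Applying `S` once more and using `S² = g (·) g⁻¹`, the operator `l_g ∘ r_x` becomes the finite
sum of rank-one maps `y ↦ μ (c₁ y) • S c₂ g x`, whose trace is
`∑ μ (c₁ S c₂ g x) = ε c • μ (g x)`.

If `ε c ≠ 0`, averaging a `k`-linear projection `φ` with the left integral `c`,
`v ↦ ε(c)⁻¹ • ∑ c₁ • φ (S c₂ • v)`, makes it `H`-linear (Maschke). If `ε c = 0`, then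
`(y c)² = 0` for every `y`, so `c` lies in the Jacobson radical, which vanishes when `H` is
semisimple.
-/

open TensorProduct Coalgebra LinearMap WithConv
open Algebra.TensorProduct (includeLeft includeRight)

namespace HopfAlgebra

section CommRing

variable {k H : Type*} [CommRing k] [Ring H] [HopfAlgebra k H]

theorem sum_integral_mul_smul_eq_antipode (μ : H →ₗ[k] k)
    (hμ : ∀ x : H, TensorProduct.lid k H (μ.rTensor H (comul x)) = μ x • (1 : H))
    {c : H} (hcr : ∀ x : H, c * x = counit (R := k) x • c) (hμc : μ c = 1)
    {ι : Type*} (rc : Coalgebra.Repr k c ι) (y : H) :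
    ∑ i ∈ rc.index, μ (rc.left i * y) • rc.right i = antipode k y := by
  let Φ : H →ₗ[k] H := ∑ i ∈ rc.index, (μ ∘ₗ mulLeft k (rc.left i)).smulRight (rc.right i)
  have hΦ : toConv Φ * toConv LinearMap.id = 1 := by
    ext y
    rw [(ℛ k y).convMul_apply, convOne_apply, Algebra.algebraMap_eq_smul_one]
    have h := hμ (c * y)
    rw [show μ (c * y) = counit y by rw [hcr, map_smul, hμc, smul_eq_mul, mul_one],
      Bialgebra.comul_mul, ← rc.eq, ← (ℛ k y).eq, Finset.sum_mul_sum] at h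
    simpa [Φ, Finset.sum_mul, Algebra.TensorProduct.tmul_mul_tmul, smul_mul_assoc,
      Finset.sum_comm (s := (ℛ k y).index)] using h
  have : Φ = antipode k := congrArg ofConv (left_inv_eq_right_inv hΦ (id_mul_antipode (R := k)))
  simpa [Φ] using congr($this y)

theorem mem_jacobson_of_counit_eq_zero {c : H} (hcr : ∀ x : H, c * x = counit (R := k) x • c)
    (hc : counit (R := k) c = 0) : c ∈ Ring.jacobson H := by
  have hsq (y : H) : y * c * (y * c) = 0 := by
    rw [mul_assoc, ← mul_assoc c, hcr, smul_mul_assoc, hcr, hc, zero_smul, smul_zero, mul_zero]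
  rw [← Ideal.jacobson_bot, Ideal.mem_jacobson_iff]
  refine fun y => ⟨1 - y * c, ?_⟩
  rw [Submodule.mem_bot, ← neg_eq_zero, ← hsq y]
  noncomm_ring

theorem counit_ne_zero_of_isSemisimpleRing [IsSemisimpleRing H] {c : H} (hc0 : c ≠ 0)
    (hcr : ∀ x : H, c * x = counit (R := k) x • c) : counit (R := k) c ≠ 0 := fun hc =>
  hc0 <| by simpa [IsSemisimpleRing.jacobson_eq_bot] using mem_jacobson_of_counit_eq_zero hcr hc

/- Both sides are `(L * (t • R ∘ S) * R) h` for the two bracketings of the convolution product on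
`H →ₗ[k] H ⊗[k] H`, where `L a = a ⊗ 1`, `R a = 1 ⊗ a` and `t = (id ⊗ S) (Δ c)`: the left integral
property gives `L * (t • R ∘ S) = t • 1`, while `(R ∘ S) * R = 1`. Coassociativity enters only
through associativity of convolution. -/
theorem tmul_one_mul_lTensor_antipode_comul {c : H}
    (hcl : ∀ x : H, x * c = counit (R := k) x • c) (h : H) :
    (h ⊗ₜ[k] (1 : H)) * (antipode k).lTensor H (comul c) =
      (antipode k).lTensor H (comul c) * ((1 : H) ⊗ₜ[k] h) := by
  set t := (antipode k).lTensor H (comul c)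
  let L : WithConv (H →ₗ[k] H ⊗[k] H) := toConv (includeLeft : H →ₐ[k] H ⊗[k] H).toLinearMap
  let R : WithConv (H →ₗ[k] H ⊗[k] H) := toConv (includeRight : H →ₐ[k] H ⊗[k] H).toLinearMap
  let RS : WithConv (H →ₗ[k] H ⊗[k] H) :=
    toConv ((includeRight : H →ₐ[k] H ⊗[k] H).toLinearMap ∘ₗ antipode k)
  have hRS : RS * R = 1 := by
    ext a
    rw [(ℛ k a).convMul_apply, convOne_apply, Algebra.TensorProduct.algebraMap_apply',
      ← sum_antipode_mul_eq_algebraMap_counit (ℛ k a), tmul_sum]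
    simp [RS, R]
  have hLRS : L * (t • RS) = MulOpposite.op t • 1 := by
    ext a
    rw [(ℛ k a).convMul_apply]
    have := congrArg ((antipode k).lTensor H) (congrArg comul (hcl a))
    rw [Bialgebra.comul_mul, ← (ℛ k a).eq, ← (ℛ k c).eq, Finset.sum_mul_sum] at this
    simpa [L, RS, t, Finset.mul_sum, Finset.sum_mul, Algebra.TensorProduct.tmul_mul_tmul,
      antipode_mul_antidistrib, ← (ℛ k c).eq, Algebra.smul_def] using this
  have hcomm : MulOpposite.op t • (1 : WithConv (H →ₗ[k] H ⊗[k] H)) = t • 1 := by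
    ext a
    simp only [ofConv_smul, LinearMap.smul_apply, convOne_apply, MulOpposite.smul_eq_mul_unop,
      MulOpposite.unop_op, smul_eq_mul]
    exact Algebra.commutes _ t
  have key : L * (MulOpposite.op t • 1) = (t • 1) * R := by
    calc L * (MulOpposite.op t • 1) = L * (t • (RS * R)) := by rw [hcomm, hRS]
      _ = (L * (t • RS)) * R := by rw [← smul_mul_assoc, mul_assoc]
      _ = (t • 1) * R := by rw [hLRS, hcomm]
  rw [mul_smul_comm, smul_mul_assoc, mul_one, one_mul] at key
  simpa [L, R] using congr($key h)

variable {V W : Type*} [AddCommGroup V] [Module H V] [Module k V] [IsScalarTower k H V]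
  [AddCommGroup W] [Module H W] [Module k W] [IsScalarTower k H W]

noncomputable def sandwich (φ : W →ₗ[k] V) : H ⊗[k] H →ₗ[k] W →ₗ[k] V :=
  TensorProduct.lift (((llcomp k W V V).comp (Algebra.lsmul k k V).toLinearMap).compl₂
    ((llcomp k W W V φ).comp (Algebra.lsmul k k W).toLinearMap))

@[simp]
theorem sandwich_tmul (φ : W →ₗ[k] V) (a b : H) (w : W) :
    sandwich φ (a ⊗ₜ b) w = a • φ (b • w) := rfl

theorem sandwich_tmul_one_mul (φ : W →ₗ[k] V) (h : H) (u : H ⊗[k] H) (w : W) :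
    sandwich φ ((h ⊗ₜ 1) * u) w = h • sandwich φ u w := by
  induction u using TensorProduct.induction_on with
  | zero => simp
  | tmul a b => simp [mul_smul]
  | add u v hu hv => simp [mul_add, hu, hv]

theorem sandwich_mul_one_tmul (φ : W →ₗ[k] V) (h : H) (u : H ⊗[k] H) (w : W) :
    sandwich φ (u * (1 ⊗ₜ h)) w = sandwich φ u (h • w) := by
  induction u using TensorProduct.induction_on with
  | zero => simp
  | tmul a b => simp [mul_smul]
  | add u v hu hv => simp [add_mul, hu, hv]

theorem sandwich_apply_of_leftInverse {φ : W →ₗ[k] V} (f : V →ₗ[H] W)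
    (hφ : ∀ v, φ (f v) = v) (u : H ⊗[k] H) (v : V) :
    sandwich φ u (f v) = mul' k H u • v := by
  induction u using TensorProduct.induction_on with
  | zero => simp
  | tmul a b => rw [sandwich_tmul, ← map_smul f b v, hφ, mul'_apply, mul_smul]
  | add u v hu hv => simp [add_smul, hu, hv]

variable (k) in
noncomputable def integralAverage (c : H) (φ : W →ₗ[k] V) : W →ₗ[k] V :=
  sandwich φ ((antipode k).lTensor H (comul c))

theorem integralAverage_smul {c : H} (hcl : ∀ x : H, x * c = counit (R := k) x • c)
    (φ : W →ₗ[k] V) (h : H) (w : W) :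
    integralAverage k c φ (h • w) = h • integralAverage k c φ w := by
  rw [integralAverage, ← sandwich_mul_one_tmul, ← tmul_one_mul_lTensor_antipode_comul hcl,
    sandwich_tmul_one_mul]

theorem integralAverage_apply_of_leftInverse (c : H) {φ : W →ₗ[k] V} (f : V →ₗ[H] W)
    (hφ : ∀ v, φ (f v) = v) (v : V) :
    integralAverage k c φ (f v) = counit (R := k) c • v := by
  rw [integralAverage, sandwich_apply_of_leftInverse f hφ, mul_antipode_lTensor_comul_apply,
    algebraMap_smul]

end CommRing

section Field

variable {k H : Type*} [Field k] [Ring H] [HopfAlgebra k H]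

theorem isSemisimpleModule_of_counit_ne_zero {V : Type*} [AddCommGroup V] [Module H V]
    [Module k V] [IsScalarTower k H V]
    {c : H} (hcl : ∀ x : H, x * c = counit (R := k) x • c) (hc : counit (R := k) c ≠ 0) :
    IsSemisimpleModule H V := by
  refine { exists_isCompl := fun N => ?_ }
  obtain ⟨φ, hφ⟩ := (N.subtype.restrictScalars k).exists_leftInverse_of_injective (by simp)
  let q : V →ₗ[H] N :=
    { toFun := fun v => (counit (R := k) c)⁻¹ • integralAverage k c φ v
      map_add' := by simp
      map_smul' := fun h v => by
        rw [RingHom.id_apply, integralAverage_smul hcl, smul_comm] }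
  refine ⟨LinearMap.ker q, LinearMap.isCompl_of_proj fun n => ?_⟩
  change (counit (R := k) c)⁻¹ • integralAverage k c φ (N.subtype n) = n
  rw [integralAverage_apply_of_leftInverse c N.subtype (fun n => congr($hφ n)), inv_smul_smul₀ hc]

theorem trace_mulLeft_comp_mulRight [FiniteDimensional k H] (μ : H →ₗ[k] k)
    (hμ : ∀ x : H, TensorProduct.lid k H (μ.rTensor H (comul x)) = μ x • (1 : H))
    {c : H} (hcr : ∀ x : H, c * x = counit (R := k) x • c) (hμc : μ c = 1)
    {g gi : H} (hgig : gi * g = 1) (hpiv : ∀ x : H, antipode k (antipode k x) = g * x * gi)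
    (x : H) :
    trace k H (mulLeft k g ∘ₗ mulRight k x) = counit (R := k) c * μ (g * x) := by
  let rc := ℛ k c
  have hgS (y : H) : g * y = antipode k (antipode k y) * g := by
    rw [hpiv, mul_assoc, hgig, mul_one]
  have hf : mulLeft k g ∘ₗ mulRight k x = ∑ i ∈ rc.index,
      (μ ∘ₗ mulLeft k (rc.left i)).smulRight (antipode k (rc.right i) * (g * x)) := by
    ext y
    calc g * (y * x) = antipode k (antipode k y) * (g * x) := by rw [← mul_assoc, hgS, mul_assoc]
      _ = _ := by simp [← sum_integral_mul_smul_eq_antipode μ hμ hcr hμc rc y, Finset.sum_mul]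
  rw [hf, map_sum]
  calc ∑ i ∈ rc.index, trace k H ((μ ∘ₗ mulLeft k (rc.left i)).smulRight
        (antipode k (rc.right i) * (g * x)))
      = μ ((∑ i ∈ rc.index, rc.left i * antipode k (rc.right i)) * (g * x)) := by
        simp [Finset.sum_mul, mul_assoc]
    _ = counit (R := k) c * μ (g * x) := by simp [sum_mul_antipode_eq_smul rc]

theorem isSemisimpleRing_iff_counit_ne_zero {c : H} (hc0 : c ≠ 0)
    (hcl : ∀ x : H, x * c = counit (R := k) x • c)
    (hcr : ∀ x : H, c * x = counit (R := k) x • c) :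
    IsSemisimpleRing H ↔ counit (R := k) c ≠ 0 :=
  ⟨fun _ => counit_ne_zero_of_isSemisimpleRing hc0 hcr, isSemisimpleModule_of_counit_ne_zero hcl⟩

end Field

end HopfAlgebra

theorem stmt18_general (k H : Type) [Field k] [Ring H] [HopfAlgebra k H] [FiniteDimensional k H]
    (μ : H →ₗ[k] k)
    (hμ : ∀ x : H,
      TensorProduct.lid k H (LinearMap.rTensor H μ (Coalgebra.comul x)) = μ x • (1 : H))
    (c : H)
    (hcl : ∀ x : H, x * c = Coalgebra.counit (R := k) x • c)
    (hcr : ∀ x : H, c * x = Coalgebra.counit (R := k) x • c)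
    (hμc : μ c = 1)
    (g gi : H) (hgig : gi * g = 1)
    (hge : Coalgebra.counit (R := k) g = (1 : k))
    (hpiv : ∀ x : H,
      HopfAlgebra.antipode (R := k) (HopfAlgebra.antipode (R := k) x) = g * x * gi) :
    (∀ x : H,
      LinearMap.trace k H (LinearMap.mulLeft k g ∘ₗ LinearMap.mulRight k x) =
        Coalgebra.counit (R := k) c * μ (g * x)) ∧
    ((∀ x : H,
        LinearMap.trace k H (LinearMap.mulLeft k g ∘ₗ LinearMap.mulRight k x) = 0) ↔
      ¬ IsSemisimpleRing H) := by
  have trace_eq := HopfAlgebra.trace_mulLeft_comp_mulRight μ hμ hcr hμc hgig hpiv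
  have hc0 : c ≠ 0 := by rintro rfl; simp at hμc
  refine ⟨trace_eq, ?_⟩
  rw [HopfAlgebra.isSemisimpleRing_iff_counit_ne_zero hc0 hcl hcr, not_not]
  refine ⟨fun h => ?_, fun h x => by rw [trace_eq, h, zero_mul]⟩
  have := h c
  rwa [trace_eq, hcl, hge, one_smul, hμc, mul_one] at this

/-- Proposition 1.2 (right case): for a finite-dimensional unimodular pivotal Hopf algebra
`(H, g)` with right integral `μ` and two-sided cointegral `c` normalised by `μ(c) = 1`, the
quantum trace of the endomorphism `l_g ∘ r_x` of the regular representation equals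
`ε(c) · μ(g x)`; in particular the quantum trace on the regular representation vanishes
identically if and only if `H` is not semisimple. -/
theorem stmt18 (k H : Type) [Field k] [Ring H] [HopfAlgebra k H] [FiniteDimensional k H]
    (μ : H →ₗ[k] k)
    (hμ : ∀ x : H,
      TensorProduct.lid k H (LinearMap.rTensor H μ (Coalgebra.comul x)) = μ x • (1 : H))
    (c : H)
    (hcl : ∀ x : H, x * c = Coalgebra.counit (R := k) x • c)
    (hcr : ∀ x : H, c * x = Coalgebra.counit (R := k) x • c)
    (hμc : μ c = 1)
    (g gi : H) (hggi : g * gi = 1) (hgig : gi * g = 1)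
    (hgrp : Coalgebra.comul (R := k) g = g ⊗ₜ[k] g)
    (hge : Coalgebra.counit (R := k) g = (1 : k))
    (hpiv : ∀ x : H,
      HopfAlgebra.antipode (R := k) (HopfAlgebra.antipode (R := k) x) = g * x * gi) :
    (∀ x : H,
      LinearMap.trace k H (LinearMap.mulLeft k g ∘ₗ LinearMap.mulRight k x) =
        Coalgebra.counit (R := k) c * μ (g * x)) ∧
    ((∀ x : H,
        LinearMap.trace k H (LinearMap.mulLeft k g ∘ₗ LinearMap.mulRight k x) = 0) ↔
      ¬ IsSemisimpleRing H) :=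
  stmt18_general k H μ hμ c hcl hcr hμc g gi hgig hge hpiv
end

section
/- Let p ≥ 2 and let H = \bar{U}_q sl_2 be the restricted quantum group at a primitive 2p-th root of unity q, with PBW basis F^i E^m K^n (0 ≤ i,m ≤ p−1, 0 ≤ n ≤ 2p−1). The element c = (Σ_{m=1}^{2p} K^m) F^{p−1} E^{p−1} is a two-sided cointegral: x·c = ε(x)·c = c·x for all x ∈ H. In particular \bar{U}_q sl_2 is unimodular. -/
/-!
Put `Λ = ∑ₘ Kᵐ` and `W = F^{p-1} E^{p-1}`. Since `K^{2p} = 1`, `Λ` absorbs `K^{±1}` on both sides,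
and since `W` has `K`-weight zero, `c = Λ W = W Λ`; so `K^{±1}` fix `c` from both sides, while
`F c = 0` and `c E = 0` by nilpotency. For `E c`, push `E` through `F^{p-1}`: the term
`F^{p-1} E^p Λ` vanishes and `[E, F^{p-1}] = F^{p-2} (α K - β K⁻¹)` contributes
`(α q^{2(p-1)} - β q^{-2(p-1)}) F^{p-2} E^{p-1} Λ`, whose coefficient is zero as `q^{2p} = 1`.
The defining relations are invariant under passing to `Hᵐᵒᵖ` and swapping `E` and `F`, which turns
`c F = 0` into the same computation. Finally `E, F, K^{±1}` generate `H`, and the elements `x`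
with `x c = ε(x) c = c x` form a subalgebra.
-/

open Finset

section GeomSum

variable {R : Type*} [Ring R] {x : R} {n : ℕ}

theorem sum_range_pow_succ_eq_geom_sum (h : x ^ n = 1) :
    ∑ i ∈ range n, x ^ (i + 1) = ∑ i ∈ range n, x ^ i := by
  have h' := sum_range_succ' (fun i => x ^ i) n
  rw [sum_range_succ, h, pow_zero] at h'
  exact (add_right_cancel h').symm

theorem geom_sum_mul_eq_self (h : x ^ n = 1) :
    (∑ i ∈ range n, x ^ i) * x = ∑ i ∈ range n, x ^ i := by
  simp_rw [sum_mul, ← pow_succ, sum_range_pow_succ_eq_geom_sum h]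

theorem mul_geom_sum_eq_self (h : x ^ n = 1) :
    x * ∑ i ∈ range n, x ^ i = ∑ i ∈ range n, x ^ i := by
  simp_rw [mul_sum, ← pow_succ', sum_range_pow_succ_eq_geom_sum h]

end GeomSum

theorem geom_sum_inv_mul_pow {k : Type*} [Field k] {s : k} (hs : s ≠ 0) (n : ℕ) :
    (∑ i ∈ range (n + 1), s⁻¹ ^ i) * s ^ n = ∑ i ∈ range (n + 1), s ^ i := by
  induction n with
  | zero => simp
  | succ n ih =>
    rw [geom_sum_succ, add_mul, mul_comm s⁻¹, mul_assoc, pow_succ' s n, inv_mul_cancel_left₀ hs,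
      ih, one_mul, geom_sum_succ' (n := n + 1), add_comm, pow_succ']

section SkewCommute

variable {k A : Type*} [CommSemiring k] [Semiring A] [Algebra k A] {a b : A} {r : k}

theorem mul_pow_eq_smul_of_mul_eq_smul (h : a * b = r • (b * a)) (n : ℕ) :
    a * b ^ n = r ^ n • (b ^ n * a) := by
  induction n with
  | zero => simp
  | succ n ih =>
    rw [pow_succ, ← mul_assoc, ih, smul_mul_assoc, mul_assoc, h, mul_smul_comm, smul_smul,
      ← pow_succ, ← mul_assoc]

end SkewCommute

theorem mul_eq_inv_smul_of_mul_eq_smul {k A : Type*} [Field k] [Ring A] [Algebra k A]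
    {a b : A} {r : k} (hr : r ≠ 0) (h : a * b = r • (b * a)) : b * a = r⁻¹ • (a * b) := by
  rw [h, smul_smul, inv_mul_cancel₀ hr, one_smul]

theorem inv_mul_eq_inv_smul_of_mul_eq_smul {k A : Type*} [Field k] [Ring A] [Algebra k A]
    {a a' b : A} {r : k} (hr : r ≠ 0) (h : a * b = r • (b * a)) (ha : a * a' = 1)
    (ha' : a' * a = 1) : a' * b = r⁻¹ • (b * a') := by
  calc a' * b = a' * (b * a) * a' := by rw [mul_assoc, mul_assoc, ha, mul_one]
    _ = r⁻¹ • (a' * (a * b) * a') := by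
        rw [mul_eq_inv_smul_of_mul_eq_smul hr h, mul_smul_comm, smul_mul_assoc]
    _ = r⁻¹ • (b * a') := by rw [← mul_assoc, ha', one_mul]

/-- The relations of `U̅_q sl₂` other than nilpotency and `K^{2p} = 1`, with `s = q²` and
`a = (q - q⁻¹)⁻¹`. -/
structure QuantumSl2Relations {k A : Type*} [Field k] [Ring A] [Algebra k A] (s a : k)
    (E F K Kinv : A) : Prop where
  K_mul_Kinv : K * Kinv = 1
  Kinv_mul_K : Kinv * K = 1
  K_mul_E : K * E = s • (E * K)
  K_mul_F : K * F = s⁻¹ • (F * K)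
  E_mul_F_sub : E * F - F * E = a • (K - Kinv)

namespace QuantumSl2Relations

variable {k A : Type*} [Field k] [Ring A] [Algebra k A] {s a : k} {E F K Kinv : A}

theorem Kinv_mul_E (h : QuantumSl2Relations s a E F K Kinv) (hs : s ≠ 0) :
    Kinv * E = s⁻¹ • (E * Kinv) :=
  inv_mul_eq_inv_smul_of_mul_eq_smul hs h.K_mul_E h.K_mul_Kinv h.Kinv_mul_K

theorem Kinv_mul_F (h : QuantumSl2Relations s a E F K Kinv) (hs : s ≠ 0) :
    Kinv * F = s • (F * Kinv) := by
  simpa using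
    inv_mul_eq_inv_smul_of_mul_eq_smul (inv_ne_zero hs) h.K_mul_F h.K_mul_Kinv h.Kinv_mul_K

theorem op (h : QuantumSl2Relations s a E F K Kinv) (hs : s ≠ 0) :
    QuantumSl2Relations s a (MulOpposite.op F) (MulOpposite.op E) (MulOpposite.op K)
      (MulOpposite.op Kinv) where
  K_mul_Kinv := by rw [← MulOpposite.op_mul, h.Kinv_mul_K, MulOpposite.op_one]
  Kinv_mul_K := by rw [← MulOpposite.op_mul, h.K_mul_Kinv, MulOpposite.op_one]
  K_mul_E := by
    simpa using
      congrArg MulOpposite.op (mul_eq_inv_smul_of_mul_eq_smul (inv_ne_zero hs) h.K_mul_F)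
  K_mul_F := by
    simpa using congrArg MulOpposite.op (mul_eq_inv_smul_of_mul_eq_smul hs h.K_mul_E)
  E_mul_F_sub := by
    simpa [← MulOpposite.op_mul, ← MulOpposite.op_sub] using congrArg MulOpposite.op h.E_mul_F_sub

theorem E_mul_F_pow_succ (h : QuantumSl2Relations s a E F K Kinv) (hs : s ≠ 0) (n : ℕ) :
    E * F ^ (n + 1) = F ^ (n + 1) * E + a • (F ^ n *
      ((∑ i ∈ range (n + 1), s⁻¹ ^ i) • K - (∑ i ∈ range (n + 1), s ^ i) • Kinv)) := by
  induction n with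
  | zero => simpa [sub_eq_iff_eq_add'] using h.E_mul_F_sub
  | succ n ih =>
    have hEF : E * F = F * E + a • (K - Kinv) := sub_eq_iff_eq_add'.mp h.E_mul_F_sub
    rw [pow_succ F (n + 1), ← mul_assoc, ih]
    simp only [add_mul, sub_mul, smul_mul_assoc, mul_assoc, hEF, h.K_mul_F, h.Kinv_mul_F hs,
      mul_add, mul_sub, mul_smul_comm]
    rw [geom_sum_succ (n := n + 1), geom_sum_succ (n := n + 1)]
    simp only [← mul_assoc, ← pow_succ]
    module

theorem commute_K_F_pow_mul_E_pow (h : QuantumSl2Relations s a E F K Kinv) (hs : s ≠ 0)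
    (n : ℕ) : Commute K (F ^ n * E ^ n) := by
  rw [Commute, SemiconjBy, ← mul_assoc, mul_pow_eq_smul_of_mul_eq_smul h.K_mul_F, smul_mul_assoc,
    mul_assoc, mul_pow_eq_smul_of_mul_eq_smul h.K_mul_E, mul_smul_comm, smul_smul, ← mul_pow,
    inv_mul_cancel₀ hs, one_pow, one_smul, mul_assoc]

theorem E_mul_F_pow_mul_E_pow_mul_eq_zero (h : QuantumSl2Relations s a E F K Kinv) {n : ℕ}
    (hs : s ^ (n + 2) = 1) (hE : E ^ (n + 2) = 0) {z : A} (hKz : K * z = z)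
    (hKinvz : Kinv * z = z) :
    E * (F ^ (n + 1) * E ^ (n + 1) * z) = 0 := by
  have hs0 : s ≠ 0 := (IsUnit.of_pow_eq_one hs (by omega)).ne_zero
  have hsinv : s⁻¹ ^ (n + 1) = s := by
    rw [inv_pow, inv_eq_iff_eq_inv, ← mul_eq_one_iff_eq_inv₀ hs0, ← pow_succ, hs]
  set α := ∑ i ∈ range (n + 1), s⁻¹ ^ i
  set β := ∑ i ∈ range (n + 1), s ^ i
  have hαβ : α * s ^ (n + 1) - β * s⁻¹ ^ (n + 1) = 0 := by
    rw [hsinv, pow_succ, ← mul_assoc, geom_sum_inv_mul_pow hs0, sub_self]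
  calc E * (F ^ (n + 1) * E ^ (n + 1) * z)
      = F ^ (n + 1) * E ^ (n + 2) * z +
          a • (F ^ n * ((α • (K * E ^ (n + 1)) - β • (Kinv * E ^ (n + 1))) * z)) := by
        simp only [← mul_assoc, h.E_mul_F_pow_succ hs0, add_mul, smul_mul_assoc]
        simp only [mul_assoc, sub_mul, smul_mul_assoc, ← pow_succ']
        rfl
    _ = a • (F ^ n * ((α * s ^ (n + 1) - β * s⁻¹ ^ (n + 1)) • (E ^ (n + 1) * z))) := by
        rw [hE, mul_zero, zero_mul, zero_add, mul_pow_eq_smul_of_mul_eq_smul h.K_mul_E,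
          mul_pow_eq_smul_of_mul_eq_smul (h.Kinv_mul_E hs0)]
        simp only [smul_smul, sub_mul, smul_mul_assoc, mul_assoc, hKz, hKinvz, sub_smul]
    _ = 0 := by rw [hαβ, zero_smul, mul_zero, smul_zero]

theorem mul_F_pow_mul_E_pow_mul_F_eq_zero (h : QuantumSl2Relations s a E F K Kinv) {n : ℕ}
    (hs : s ^ (n + 2) = 1) (hF : F ^ (n + 2) = 0) {z : A} (hzK : z * K = z)
    (hzKinv : z * Kinv = z) :
    z * F ^ (n + 1) * E ^ (n + 1) * F = 0 := by
  have hs0 : s ≠ 0 := (IsUnit.of_pow_eq_one hs (by omega)).ne_zero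
  have h' := (h.op hs0).E_mul_F_pow_mul_E_pow_mul_eq_zero hs
    (by rw [← MulOpposite.op_pow, hF, MulOpposite.op_zero]) (z := MulOpposite.op z)
    (by rw [← MulOpposite.op_mul, hzK]) (by rw [← MulOpposite.op_mul, hzKinv])
  simpa [← MulOpposite.op_pow, ← MulOpposite.op_mul, mul_assoc] using h'

theorem generators_mul_and_mul_generators (h : QuantumSl2Relations s a E F K Kinv) {m n : ℕ}
    (hs : s ^ (n + 2) = 1) (hE : E ^ (n + 2) = 0) (hF : F ^ (n + 2) = 0) (hK : K ^ m = 1) {c : A}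
    (hc : c = (∑ i ∈ range m, K ^ i) * F ^ (n + 1) * E ^ (n + 1)) :
    (E * c = 0 ∧ c * E = 0) ∧ (F * c = 0 ∧ c * F = 0) ∧ (K * c = c ∧ c * K = c) ∧
      (Kinv * c = c ∧ c * Kinv = c) := by
  have hs0 : s ≠ 0 := (IsUnit.of_pow_eq_one hs (by omega)).ne_zero
  set Λ := ∑ i ∈ range m, K ^ i
  have hKΛ : K * Λ = Λ := mul_geom_sum_eq_self hK
  have hΛK : Λ * K = Λ := geom_sum_mul_eq_self hK
  have hKinvΛ : Kinv * Λ = Λ := by rw [← hKΛ, ← mul_assoc, h.Kinv_mul_K, one_mul, hKΛ]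
  have hΛKinv : Λ * Kinv = Λ := by rw [← hΛK, mul_assoc, h.K_mul_Kinv, mul_one, hΛK]
  have hc' : c = F ^ (n + 1) * E ^ (n + 1) * Λ := by
    rw [hc, mul_assoc]
    exact Commute.sum_left _ _ _ fun i _ => (h.commute_K_F_pow_mul_E_pow hs0 _).pow_left i
  refine ⟨⟨?_, ?_⟩, ⟨?_, ?_⟩, ⟨?_, ?_⟩, ?_, ?_⟩
  · rw [hc']; exact h.E_mul_F_pow_mul_E_pow_mul_eq_zero hs hE hKΛ hKinvΛ
  · rw [hc, mul_assoc, ← pow_succ, hE, mul_zero]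
  · rw [hc', ← mul_assoc, ← mul_assoc, ← pow_succ', hF, zero_mul, zero_mul]
  · rw [hc]; exact h.mul_F_pow_mul_E_pow_mul_F_eq_zero hs hF hΛK hΛKinv
  · rw [hc, ← mul_assoc, ← mul_assoc, hKΛ]
  · rw [hc', mul_assoc, hΛK]
  · rw [hc, ← mul_assoc, ← mul_assoc, hKinvΛ]
  · rw [hc', mul_assoc, hΛKinv]

end QuantumSl2Relations

def IsTwoSidedCointegral (k : Type*) {H : Type*} [CommSemiring k] [Semiring H] [Bialgebra k H]
    (c : H) : Prop :=
  ∀ x : H, x * c = Coalgebra.counit (R := k) x • c ∧ c * x = Coalgebra.counit (R := k) x • c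

theorem isTwoSidedCointegral_of_adjoin_eq_top {k H : Type*} [CommSemiring k] [Semiring H]
    [Bialgebra k H] {S : Set H} (hS : Algebra.adjoin k S = ⊤) {c : H}
    (hc : ∀ x ∈ S, x * c = Coalgebra.counit (R := k) x • c ∧
      c * x = Coalgebra.counit (R := k) x • c) :
    IsTwoSidedCointegral k c := by
  intro x
  induction (hS ▸ Algebra.mem_top : x ∈ Algebra.adjoin k S) using Algebra.adjoin_induction with
  | mem x hx => exact hc x hx
  | algebraMap r =>
    simp only [Bialgebra.counit_algebraMap, Algebra.smul_def, Algebra.commutes, and_self]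
  | add x y _ _ hx hy =>
    simp only [add_mul, mul_add, hx.1, hx.2, hy.1, hy.2, map_add, add_smul, and_self]
  | mul x y _ _ hx hy =>
    constructor
    · rw [mul_assoc, hy.1, mul_smul_comm, hx.1, smul_smul, Bialgebra.counit_mul, mul_comm]
    · rw [← mul_assoc, hx.2, smul_mul_assoc, hy.2, smul_smul, Bialgebra.counit_mul]

theorem stmt19_general (k H : Type) [Field k] [Ring H] [HopfAlgebra k H]
    (p : ℕ) (hp : 2 ≤ p)
    (q : k) (hq : q ^ (2 * p) = 1)
    (E F K Kinv : H)
    (hK : K * Kinv = 1) (hK' : Kinv * K = 1)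
    (hKE : K * E = q ^ 2 • (E * K))
    (hKF : K * F = (q⁻¹) ^ 2 • (F * K))
    (hEF : E * F - F * E = (q - q⁻¹)⁻¹ • (K - Kinv))
    (hEp : E ^ p = 0) (hFp : F ^ p = 0) (hK2p : K ^ (2 * p) = 1)
    (hcounitE : Coalgebra.counit (R := k) E = (0 : k))
    (hcounitF : Coalgebra.counit (R := k) F = (0 : k))
    (hcounitK : Coalgebra.counit (R := k) K = (1 : k))
    (hgen : Algebra.adjoin k {E, F, K, Kinv} = (⊤ : Subalgebra k H)) :
    (∀ x : H,
      x * ((∑ m ∈ Finset.range (2 * p), K ^ (m + 1)) * F ^ (p - 1) * E ^ (p - 1)) =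
        Coalgebra.counit (R := k) x •
          ((∑ m ∈ Finset.range (2 * p), K ^ (m + 1)) * F ^ (p - 1) * E ^ (p - 1))) ∧
    (∀ x : H,
      ((∑ m ∈ Finset.range (2 * p), K ^ (m + 1)) * F ^ (p - 1) * E ^ (p - 1)) * x =
        Coalgebra.counit (R := k) x •
          ((∑ m ∈ Finset.range (2 * p), K ^ (m + 1)) * F ^ (p - 1) * E ^ (p - 1))) := by
  obtain ⟨n, rfl⟩ : ∃ n, p = n + 2 := ⟨p - 2, by omega⟩
  have h : QuantumSl2Relations (q ^ 2) (q - q⁻¹)⁻¹ E F K Kinv :=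
    ⟨hK, hK', hKE, by rwa [← inv_pow], hEF⟩
  have hcounitKinv : Coalgebra.counit (R := k) Kinv = 1 := by
    simpa [hK, hcounitK] using (Bialgebra.counit_mul (R := k) K Kinv).symm
  rw [sum_range_pow_succ_eq_geom_sum hK2p, show n + 2 - 1 = n + 1 from rfl]
  have hc : IsTwoSidedCointegral k
      ((∑ i ∈ range (2 * (n + 2)), K ^ i) * F ^ (n + 1) * E ^ (n + 1)) := by
    refine isTwoSidedCointegral_of_adjoin_eq_top hgen ?_
    simp only [Set.mem_insert_iff, Set.mem_singleton_iff, forall_eq_or_imp, forall_eq,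
      hcounitE, hcounitF, hcounitK, hcounitKinv, zero_smul, one_smul]
    exact h.generators_mul_and_mul_generators (by rw [← pow_mul]; exact hq) hEp hFp hK2p rfl
  exact ⟨fun x => (hc x).1, fun x => (hc x).2⟩

/-- Theorem 7.3 in type `A₁` (Section 8): in the restricted quantum group `H = U̅_q sl₂` at a
primitive `2p`-th root of unity `q` — presented here as any Hopf algebra generated by elements
`E, F, K, K⁻¹` satisfying the defining relations of `U̅_q sl₂`, with the standard coalgebra
structure on the generators — the element
`c = (∑_{m=1}^{2p} K^m) F^{p-1} E^{p-1}` is a two-sided cointegral: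
`x·c = ε(x)·c = c·x` for all `x ∈ H`.  In particular `U̅_q sl₂` is unimodular. -/
theorem stmt19 (k H : Type) [Field k] [Ring H] [HopfAlgebra k H]
    (p : ℕ) (hp : 2 ≤ p)
    (q : k) (hq : q ^ (2 * p) = 1)
    (hqprim : ∀ m : ℕ, 0 < m → m < 2 * p → q ^ m ≠ 1)
    (E F K Kinv : H)
    (hK : K * Kinv = 1) (hK' : Kinv * K = 1)
    (hKE : K * E = q ^ 2 • (E * K))
    (hKF : K * F = (q⁻¹) ^ 2 • (F * K))
    (hEF : E * F - F * E = (q - q⁻¹)⁻¹ • (K - Kinv))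
    (hEp : E ^ p = 0) (hFp : F ^ p = 0) (hK2p : K ^ (2 * p) = 1)
    (hcomulE : Coalgebra.comul (R := k) E = (1 : H) ⊗ₜ[k] E + E ⊗ₜ[k] K)
    (hcomulF : Coalgebra.comul (R := k) F = Kinv ⊗ₜ[k] F + F ⊗ₜ[k] (1 : H))
    (hcomulK : Coalgebra.comul (R := k) K = K ⊗ₜ[k] K)
    (hcounitE : Coalgebra.counit (R := k) E = (0 : k))
    (hcounitF : Coalgebra.counit (R := k) F = (0 : k))
    (hcounitK : Coalgebra.counit (R := k) K = (1 : k))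
    (hgen : Algebra.adjoin k {E, F, K, Kinv} = (⊤ : Subalgebra k H)) :
    (∀ x : H,
      x * ((∑ m ∈ Finset.range (2 * p), K ^ (m + 1)) * F ^ (p - 1) * E ^ (p - 1)) =
        Coalgebra.counit (R := k) x •
          ((∑ m ∈ Finset.range (2 * p), K ^ (m + 1)) * F ^ (p - 1) * E ^ (p - 1))) ∧
    (∀ x : H,
      ((∑ m ∈ Finset.range (2 * p), K ^ (m + 1)) * F ^ (p - 1) * E ^ (p - 1)) * x =
        Coalgebra.counit (R := k) x •
          ((∑ m ∈ Finset.range (2 * p), K ^ (m + 1)) * F ^ (p - 1) * E ^ (p - 1))) :=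
  stmt19_general k H p hp q hq E F K Kinv hK hK' hKE hKF hEF hEp hFp hK2p hcounitE hcounitF hcounitK
    hgen
end
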